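/- Let n₁ ≥ n₂ > 0 and β ∈ (0, 1]. For γ ∈ (0, 1), define λ̃₁(γ) as follows: if (4+γ²)/n₁^β ≤ 4γ/n₂^β + (2−γ)²/(n₁+n₂)^β, then λ̃₁(γ) = (n₂/n₁)·((1 − ((4+γ²)/(4γ)) (n₂/n₁)^β (1 − (n₁/(n₁+n₂))^β))^{−1/β} − 1); otherwise λ̃₁(γ) = 1. Then λ̃₁ is nonincreasing in γ on (0, 1): the condition defining the non-unit branch becomes satisfied at a threshold in γ (its defining expression 4γ h₂ − (4+γ²) h₁, with h_i = n_i^{−β} − (n₁+n₂)^{−β}, is increasing in γ), and on the non-unit branch the value is decreasing in γ. -/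

import Mathlib

/-!
On the non-unit branch, `λ̃₁ = (n₂/n₁)(U(γ)^{-1/β} - 1)` with `U(γ) = 1 - φ(γ) κ`,
`φ(γ) = (4 + γ²)/(4γ)` and `κ = (n₂/n₁)^β (1 - (n₁/(n₁+n₂))^β) > 0`. Since `φ` decreases on
`(0, 2]`, `U` increases there, so `λ̃₁` strictly decreases. The branch condition is
`4γh₂ - (4+γ²)h₁ ≥ 0`, and `0 < h₁ ≤ h₂` makes this expression increasing for `γ ≤ 2`, so the
branch is an up-set in `γ`. Finally the condition gives `U(γ) ≥ (n₂/(n₁+n₂))^β`, hence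
`λ̃₁ ≤ (n₂/n₁)((n₁+n₂)/n₂ - 1) = 1` on the branch, which glues it to the constant branch `1`.
-/

/-- The leading-order Nash bargaining share `λ̃₁` of the larger firm, as a function of
the substitutability parameter `γ` (with data sizes `n₁ ≥ n₂` and difficulty `β`). -/
noncomputable def lamTilde (n₁ n₂ β γ : ℝ) : ℝ :=
  if (4 + γ ^ 2) / n₁ ^ β ≤ 4 * γ / n₂ ^ β + (2 - γ) ^ 2 / (n₁ + n₂) ^ β then
    (n₂ / n₁) *
      ((1 - ((4 + γ ^ 2) / (4 * γ)) * (n₂ / n₁) ^ β *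
          (1 - (n₁ / (n₁ + n₂)) ^ β)) ^ (-(1 / β)) - 1)
  else 1

open Set Real

theorem antitoneOn_of_eq_const_below {α β : Type*} [Preorder α] [Preorder β] {f : α → β}
    {s : Set α} {p : α → Prop} {c : β}
    (hp : ∀ ⦃x⦄, x ∈ s → ∀ ⦃y⦄, y ∈ s → x ≤ y → p x → p y)
    (hf : AntitoneOn f {x ∈ s | p x}) (hf_le : ∀ x ∈ s, p x → f x ≤ c)
    (hf_eq : ∀ x ∈ s, ¬p x → f x = c) : AntitoneOn f s := by
  intro x hx y hy hxy
  by_cases hpy : p y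
  · by_cases hpx : p x
    · exact hf ⟨hx, hpx⟩ ⟨hy, hpy⟩ hxy
    · exact (hf_le y hy hpy).trans (hf_eq x hx hpx).ge
  · have hpx : ¬p x := fun hpx => hpy (hp hx hy hxy hpx)
    exact (hf_eq y hy hpy).trans_le (hf_eq x hx hpx).ge

theorem strictMonoOn_gap {h₁ h₂ : ℝ} (hh₁ : 0 < h₁) (hh₁₂ : h₁ ≤ h₂) :
    StrictMonoOn (fun γ => 4 * γ * h₂ - (4 + γ ^ 2) * h₁) (Iic 2) := by
  intro γ hγ γ' hγ' hlt
  have hsum : γ + γ' < 4 := by linarith [mem_Iic.1 hγ, mem_Iic.1 hγ']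
  -- the increment is `(γ' - γ) (4h₂ - (γ + γ')h₁)`
  nlinarith [mul_pos (sub_pos.2 hlt) (mul_pos hh₁ (sub_pos.2 hsum)),
    mul_nonneg (sub_pos.2 hlt).le (sub_nonneg.2 hh₁₂)]

theorem strictAntiOn_four_add_sq_div :
    StrictAntiOn (fun γ : ℝ => (4 + γ ^ 2) / (4 * γ)) (Ioc 0 2) := by
  rintro γ ⟨hγ₀, hγ₂⟩ γ' ⟨hγ'₀, hγ'₂⟩ hlt
  have hprod : γ * γ' < 4 := by nlinarith
  rw [div_lt_div_iff₀ (by positivity) (by positivity)]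
  nlinarith [mul_pos (sub_pos.2 hlt) (sub_pos.2 hprod)]

def OnNonunitBranch (n₁ n₂ β γ : ℝ) : Prop :=
  (4 + γ ^ 2) / n₁ ^ β ≤ 4 * γ / n₂ ^ β + (2 - γ) ^ 2 / (n₁ + n₂) ^ β

section

variable {n₁ n₂ β γ : ℝ}

theorem onNonunitBranch_iff (hn₁ : 0 ≤ n₁) (hn₂ : 0 ≤ n₂) :
    OnNonunitBranch n₁ n₂ β γ ↔ 0 ≤ 4 * γ * (n₂ ^ (-β) - (n₁ + n₂) ^ (-β)) -
      (4 + γ ^ 2) * (n₁ ^ (-β) - (n₁ + n₂) ^ (-β)) := by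
  rw [OnNonunitBranch, ← sub_nonneg, rpow_neg hn₁, rpow_neg hn₂,
    rpow_neg (add_nonneg hn₁ hn₂)]
  ring_nf

theorem strictMonoOn_branchGap (hn₂ : 0 < n₂) (hn : n₂ ≤ n₁) (hβ : 0 < β) :
    StrictMonoOn (fun γ => 4 * γ * (n₂ ^ (-β) - (n₁ + n₂) ^ (-β)) -
      (4 + γ ^ 2) * (n₁ ^ (-β) - (n₁ + n₂) ^ (-β))) (Iic 2) := by
  have hn₁ : 0 < n₁ := hn₂.trans_le hn
  refine strictMonoOn_gap (sub_pos.2 ?_) (sub_le_sub_right ?_ _)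
  · exact rpow_lt_rpow_of_neg hn₁ (lt_add_of_pos_right n₁ hn₂) (neg_lt_zero.2 hβ)
  · exact rpow_le_rpow_of_nonpos hn₂ hn (neg_nonpos.2 hβ.le)

theorem OnNonunitBranch.of_le {γ' : ℝ} (hn₂ : 0 < n₂) (hn : n₂ ≤ n₁) (hβ : 0 < β)
    (h : OnNonunitBranch n₁ n₂ β γ) (hγγ' : γ ≤ γ') (hγ' : γ' ≤ 2) :
    OnNonunitBranch n₁ n₂ β γ' := by
  have hn₁ : 0 ≤ n₁ := hn₂.le.trans hn
  rw [onNonunitBranch_iff hn₁ hn₂.le] at h ⊢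
  exact h.trans ((strictMonoOn_branchGap hn₂ hn hβ).monotoneOn
    (mem_Iic.2 (hγγ'.trans hγ')) (mem_Iic.2 hγ') hγγ')

theorem rpow_div_add_le_of_onNonunitBranch (hn₁ : 0 < n₁) (hn₂ : 0 < n₂) (hγ : 0 < γ)
    (h : OnNonunitBranch n₁ n₂ β γ) :
    (n₂ / (n₁ + n₂)) ^ β ≤
      1 - (4 + γ ^ 2) / (4 * γ) * ((n₂ / n₁) ^ β * (1 - (n₁ / (n₁ + n₂)) ^ β)) := by
  have hs : 0 < n₁ + n₂ := add_pos hn₁ hn₂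
  rw [div_rpow hn₂.le hs.le, div_rpow hn₂.le hn₁.le, div_rpow hn₁.le hs.le]
  have ha : 0 < n₁ ^ β := rpow_pos_of_pos hn₁ β
  have hb : 0 < n₂ ^ β := rpow_pos_of_pos hn₂ β
  have hs' : 0 < (n₁ + n₂) ^ β := rpow_pos_of_pos hs β
  have hdiff : 1 - (4 + γ ^ 2) / (4 * γ) * (n₂ ^ β / n₁ ^ β * (1 - n₁ ^ β / (n₁ + n₂) ^ β)) -
      n₂ ^ β / (n₁ + n₂) ^ β = n₂ ^ β / (4 * γ) *
      (4 * γ / n₂ ^ β + (2 - γ) ^ 2 / (n₁ + n₂) ^ β - (4 + γ ^ 2) / n₁ ^ β) := by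
    field_simp
    ring
  have hgap := sub_nonneg.2 h
  rw [← sub_nonneg, hdiff]
  positivity

theorem lamTilde_of_onNonunitBranch (h : OnNonunitBranch n₁ n₂ β γ) :
    lamTilde n₁ n₂ β γ = n₂ / n₁ *
      ((1 - (4 + γ ^ 2) / (4 * γ) * ((n₂ / n₁) ^ β * (1 - (n₁ / (n₁ + n₂)) ^ β))) ^ (-(1 / β))
        - 1) := by
  rw [OnNonunitBranch] at h
  rw [lamTilde, if_pos h, mul_assoc _ ((n₂ / n₁) ^ β)]

theorem lamTilde_of_not_onNonunitBranch (h : ¬OnNonunitBranch n₁ n₂ β γ) :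
    lamTilde n₁ n₂ β γ = 1 :=
  if_neg h

theorem lamTilde_le_one_of_onNonunitBranch (hn₁ : 0 < n₁) (hn₂ : 0 < n₂) (hβ : 0 < β)
    (hγ : 0 < γ) (h : OnNonunitBranch n₁ n₂ β γ) : lamTilde n₁ n₂ β γ ≤ 1 := by
  have hq : 0 < n₂ / (n₁ + n₂) := by positivity
  have hU := rpow_div_add_le_of_onNonunitBranch hn₁ hn₂ hγ h
  have hpow : ((n₂ / (n₁ + n₂)) ^ β) ^ (-(1 / β)) = (n₂ / (n₁ + n₂))⁻¹ := by
    rw [← rpow_mul hq.le, mul_neg, mul_one_div_cancel hβ.ne', rpow_neg_one]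
  calc lamTilde n₁ n₂ β γ
      ≤ n₂ / n₁ * (((n₂ / (n₁ + n₂)) ^ β) ^ (-(1 / β)) - 1) := by
        rw [lamTilde_of_onNonunitBranch h]
        exact mul_le_mul_of_nonneg_left (sub_le_sub_right (rpow_le_rpow_of_nonpos
          (rpow_pos_of_pos hq β) hU (neg_nonpos.2 (one_div_pos.2 hβ).le)) 1) (by positivity)
    _ = 1 := by
        rw [hpow]
        field_simp
        ring

theorem strictAntiOn_lamTilde (hn₁ : 0 < n₁) (hn₂ : 0 < n₂) (hβ : 0 < β) :
    StrictAntiOn (lamTilde n₁ n₂ β) {γ ∈ Ioc 0 2 | OnNonunitBranch n₁ n₂ β γ} := by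
  rintro γ ⟨hγ, hc⟩ γ' ⟨hγ', hc'⟩ hlt
  set κ := (n₂ / n₁) ^ β * (1 - (n₁ / (n₁ + n₂)) ^ β)
  have hκ : 0 < κ := mul_pos (by positivity) (sub_pos.2 (rpow_lt_one (by positivity)
    ((div_lt_one (by positivity)).2 (lt_add_of_pos_right n₁ hn₂)) hβ))
  have hUpos : 0 < 1 - (4 + γ ^ 2) / (4 * γ) * κ :=
    (by positivity : 0 < (n₂ / (n₁ + n₂)) ^ β).trans_le
      (rpow_div_add_le_of_onNonunitBranch hn₁ hn₂ hγ.1 hc)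
  have hUU : 1 - (4 + γ ^ 2) / (4 * γ) * κ < 1 - (4 + γ' ^ 2) / (4 * γ') * κ :=
    sub_lt_sub_left (mul_lt_mul_of_pos_right (strictAntiOn_four_add_sq_div hγ hγ' hlt) hκ) 1
  rw [lamTilde_of_onNonunitBranch hc, lamTilde_of_onNonunitBranch hc']
  exact mul_lt_mul_of_pos_left (sub_lt_sub_right
    (rpow_lt_rpow_of_neg hUpos hUU (neg_lt_zero.2 (one_div_pos.2 hβ))) 1) (by positivity)

end

theorem lamTilde_nonincreasing_in_gamma_general
    (n₁ n₂ β : ℝ) (hn : n₂ ≤ n₁) (hn₂ : 0 < n₂) (hβ₁ : 0 < β)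
    (h₁ h₂ : ℝ)
    (hh₁ : h₁ = n₁ ^ (-β) - (n₁ + n₂) ^ (-β))
    (hh₂ : h₂ = n₂ ^ (-β) - (n₁ + n₂) ^ (-β)) :
    AntitoneOn (fun γ => lamTilde n₁ n₂ β γ) (Set.Ioo 0 1) ∧
    StrictMonoOn (fun γ => 4 * γ * h₂ - (4 + γ ^ 2) * h₁) (Set.Ioo 0 1) ∧
    ∀ γ γ' : ℝ, γ ∈ Set.Ioo (0 : ℝ) 1 → γ' ∈ Set.Ioo (0 : ℝ) 1 → γ < γ' →
      (4 + γ ^ 2) / n₁ ^ β ≤ 4 * γ / n₂ ^ β + (2 - γ) ^ 2 / (n₁ + n₂) ^ β →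
      (4 + γ' ^ 2) / n₁ ^ β ≤ 4 * γ' / n₂ ^ β + (2 - γ') ^ 2 / (n₁ + n₂) ^ β →
      lamTilde n₁ n₂ β γ' < lamTilde n₁ n₂ β γ := by
  have hn₁ : 0 < n₁ := hn₂.trans_le hn
  have hle_two : ∀ γ ∈ Ioo (0 : ℝ) 1, γ ≤ 2 := fun γ hγ => hγ.2.le.trans one_le_two
  have hstrict :
      StrictAntiOn (lamTilde n₁ n₂ β) {γ ∈ Ioo 0 1 | OnNonunitBranch n₁ n₂ β γ} :=
    (strictAntiOn_lamTilde hn₁ hn₂ hβ₁).mono fun γ hγ => ⟨⟨hγ.1.1, hle_two γ hγ.1⟩, hγ.2⟩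
  refine ⟨?_, ?_, fun γ γ' hγ hγ' hlt hc hc' => hstrict ⟨hγ, hc⟩ ⟨hγ', hc'⟩ hlt⟩
  · refine antitoneOn_of_eq_const_below (p := OnNonunitBranch n₁ n₂ β)
      (fun γ _ γ' hγ' hle hc => hc.of_le hn₂ hn hβ₁ hle (hle_two γ' hγ')) hstrict.antitoneOn
      (fun γ hγ hc => lamTilde_le_one_of_onNonunitBranch hn₁ hn₂ hβ₁ hγ.1 hc)
      (fun γ _ hc => lamTilde_of_not_onNonunitBranch hc)
  · subst hh₁ hh₂
    exact (strictMonoOn_branchGap hn₂ hn hβ₁).mono hle_two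

/-- **`λ̃₁` is nonincreasing in `γ` (from Theorem 2).** For `n₁ ≥ n₂ > 0` and
`β ∈ (0,1]`, the bargaining share `λ̃₁` is nonincreasing in `γ` on `(0,1)`; moreover the
expression `4γh₂ - (4+γ²)h₁` (with `h_i = n_i^{-β} - (n₁+n₂)^{-β}`) defining the
non-unit branch condition is increasing in `γ`, and on the non-unit branch the value is
decreasing in `γ`. -/
theorem lamTilde_nonincreasing_in_gamma
    (n₁ n₂ β : ℝ) (hn : n₂ ≤ n₁) (hn₂ : 0 < n₂) (hβ₁ : 0 < β) (hβ₂ : β ≤ 1)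
    (h₁ h₂ : ℝ)
    (hh₁ : h₁ = n₁ ^ (-β) - (n₁ + n₂) ^ (-β))
    (hh₂ : h₂ = n₂ ^ (-β) - (n₁ + n₂) ^ (-β)) :
    AntitoneOn (fun γ => lamTilde n₁ n₂ β γ) (Set.Ioo 0 1) ∧
    StrictMonoOn (fun γ => 4 * γ * h₂ - (4 + γ ^ 2) * h₁) (Set.Ioo 0 1) ∧
    ∀ γ γ' : ℝ, γ ∈ Set.Ioo (0 : ℝ) 1 → γ' ∈ Set.Ioo (0 : ℝ) 1 → γ < γ' →
      (4 + γ ^ 2) / n₁ ^ β ≤ 4 * γ / n₂ ^ β + (2 - γ) ^ 2 / (n₁ + n₂) ^ β →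
      (4 + γ' ^ 2) / n₁ ^ β ≤ 4 * γ' / n₂ ^ β + (2 - γ') ^ 2 / (n₁ + n₂) ^ β →
      lamTilde n₁ n₂ β γ' < lamTilde n₁ n₂ β γ :=
  lamTilde_nonincreasing_in_gamma_general n₁ n₂ β hn hn₂ hβ₁ h₁ h₂ hh₁ hh₂
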